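/- arXiv:2502.04620 — 2 statements merged into one kernel-verified Lean document; each statement's English description precedes it below -/
import Mathlib

section
/- The free-fermion container algebra g_large: let m, M ∈ ℕ with m ≥ 1 and let v : Fin m → Fin M be injective. Let T_v be the set of M-qubit Pauli strings T_v = {→X_{v(k)}X_{v(l)} : k ≠ l} ∪ {→Y_{v(k)}Y_{v(l)} : k ≠ l} ∪ {→X_{v(k)}Y_{v(l)} : k ≠ l} ∪ {Z_{v(k)} : k ∈ Fin m}. Then the ℝ-linear span of {Complex.I • P(t) : t ∈ T_v} is closed under the commutator bracket (hence is a Lie ℝ-subalgebra of the M-qubit complex matrices), and its ℝ-dimension equals m(2m−1). -/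
open Matrix

attribute [local instance 100] LieRing.ofAssociativeRing

/-- The four 2×2 Pauli matrices: identity, X, Y, Z. -/
noncomputable def pauli : Fin 4 → Matrix (Fin 2) (Fin 2) ℂ
  | 0 => 1
  | 1 => !![0, 1; 1, 0]
  | 2 => !![0, -Complex.I; Complex.I, 0]
  | 3 => !![1, 0; 0, -1]

/-- The matrix of an `n`-qubit Pauli string `p : Fin n → Fin 4`,
the Kronecker product of the `pauli (p i)`. -/
noncomputable def PauliMat {n : ℕ} (p : Fin n → Fin 4) :
    Matrix (Fin n → Fin 2) (Fin n → Fin 2) ℂ :=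
  Matrix.of fun x y => ∏ i, pauli (p i) (x i) (y i)

/-- The Hamiltonian algebra of a set of Pauli strings: the Lie ℝ-subalgebra of the
complex matrices generated by `{I • P(p) : p ∈ S}`. -/
noncomputable def hamAlg {n : ℕ} (S : Set (Fin n → Fin 4)) :
    LieSubalgebra ℝ (Matrix (Fin n → Fin 2) (Fin n → Fin 2) ℂ) :=
  LieSubalgebra.lieSpan ℝ _ ((fun p => Complex.I • PauliMat p) '' S)

/-- The Pauli string `→A_iB_j`: letter `A` at `i`, letter `B` at `j`, `Z` strictly
between `i` and `j`, identity elsewhere. -/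
def ladderString {n : ℕ} (i j : Fin n) (A B : Fin 4) : Fin n → Fin 4 :=
  fun k => if k = i then A else if k = j then B
    else if min i j < k ∧ k < max i j then 3 else 0

/-- The Pauli string `Z_kZ_l`. -/
def zzString {n : ℕ} (k l : Fin n) : Fin n → Fin 4 :=
  fun m => if m = k ∨ m = l then 3 else 0

/-- The Pauli string `Z_k`. -/
def zString {n : ℕ} (k : Fin n) : Fin n → Fin 4 :=
  fun m => if m = k then 3 else 0

/-- A choice of letter: `X` if `c = 0`, `Y` if `c = 1`. -/
def ltr (c : Fin 2) : Fin 4 := if c = 0 then 1 else 2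

/-- The opposite letter: `Y` if `c = 0`, `X` if `c = 1`. -/
def ltrBar (c : Fin 2) : Fin 4 := if c = 0 then 2 else 1

/-- Pauli strings of the Jordan–Wigner transformed hopping terms of one spin species,
with sites embedded via `v : Fin N → Fin (2N)` and hoppings on the edges of `G`. -/
def Sspin {N : ℕ} (G : SimpleGraph (Fin N)) (v : Fin N → Fin (2 * N)) :
    Set (Fin (2 * N) → Fin 4) :=
  {p | ∃ k l : Fin N, G.Adj k l ∧
    (p = ladderString (v k) (v l) 1 1 ∨ p = ladderString (v k) (v l) 2 2)}

/-- Pauli strings of the Jordan–Wigner transformed free fermion model. -/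
def Sfree {N : ℕ} (G : SimpleGraph (Fin N)) (u d : Fin N → Fin (2 * N)) :
    Set (Fin (2 * N) → Fin 4) :=
  Sspin G u ∪ Sspin G d

/-- Pauli strings of the model with a single on-site Coulomb interaction at fermion
site `i0` (interaction term `Z_{u i0} Z_{d i0}`). -/
def Sint {N : ℕ} (G : SimpleGraph (Fin N)) (u d : Fin N → Fin (2 * N)) (i0 : Fin N) :
    Set (Fin (2 * N) → Fin 4) :=
  Sfree G u d ∪ {zzString (u i0) (d i0)}

/-- The container set T_v of Pauli strings for the free-fermion algebra:
`→X_{v k}X_{v l}`, `→Y_{v k}Y_{v l}`, `→X_{v k}Y_{v l}` (all ordered pairs `k ≠ l`,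
which also yields the `YX` strings), and `Z_{v k}`. -/
def Tset {m M : ℕ} (v : Fin m → Fin M) : Set (Fin M → Fin 4) :=
  {t | ∃ k l : Fin m, k ≠ l ∧
      (t = ladderString (v k) (v l) 1 1 ∨ t = ladderString (v k) (v l) 2 2 ∨
       t = ladderString (v k) (v l) 1 2)} ∪
  {t | ∃ k : Fin m, t = zString (v k)}


/-!
Jordan–Wigner: the strings `Z⋯Z X` and `Z⋯Z Y` ending at the sites `v k` give `2m` matrices
`γ_a` that square to one and pairwise anticommute. Up to a sign, the products `γ_a γ_b`
(`a ≠ b`) are exactly the matrices `I • P(t)`, `t ∈ T_v`, so the span in question is the span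
of the Majorana quadratics. Since `⁅AB, CD⁆ = A{B,C}D − AC{B,D} + {A,C}DB − C{A,D}B` and
`{γ_a, γ_b} = 2δ_ab`, that span is closed under the bracket. For `a < b`, `c < d` and
`(a, b) ≠ (c, d)` some `γ_e` anticommutes with `γ_a γ_b γ_c γ_d`, which makes its trace vanish;
hence the `γ_a γ_b` with `a < b` are linearly independent and the dimension is
`(2m).choose 2 = m(2m − 1)`.
-/

structure IsMajoranaFamily {ι A : Type*} [Ring A] (γ : ι → A) : Prop where
  mul_self : ∀ i, γ i * γ i = 1
  anticomm : ∀ i j, i ≠ j → γ i * γ j = -(γ j * γ i)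

def pairProducts {ι A : Type*} [Mul A] (γ : ι → A) : Set A :=
  {x | ∃ i j, i ≠ j ∧ γ i * γ j = x}

theorem Submodule.lie_mem_span_of_forall_lie_mem {R L : Type*} [CommRing R] [LieRing L]
    [LieAlgebra R L] {s : Set L} (h : ∀ x ∈ s, ∀ y ∈ s, ⁅x, y⁆ ∈ span R s) {x y : L}
    (hx : x ∈ span R s) (hy : y ∈ span R s) : ⁅x, y⁆ ∈ span R s := by
  have hle : map₂ (LieModule.toEnd R L L : L →ₗ[R] Module.End R L) (span R s) (span R s) ≤
      span R s := by
    rw [map₂_span_span, span_le]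
    rintro _ ⟨x, hx, y, hy, rfl⟩
    exact h x hx y hy
  exact hle (apply_mem_map₂ _ hx hy)

theorem Matrix.trace_eq_zero_of_anticomm {n K : Type*} [Fintype n] [DecidableEq n] [Field K]
    [CharZero K] {u X : Matrix n n K} (hu : u * u = 1) (h : u * X = -(X * u)) :
    trace X = 0 := by
  refine self_eq_neg.mp ?_
  calc trace X = trace (u * (u * X)) := by rw [← mul_assoc, hu, one_mul]
    _ = trace (u * X * u) := trace_mul_comm _ _
    _ = -trace X := by rw [h, neg_mul, trace_neg, mul_assoc, hu, mul_one]

namespace IsMajoranaFamily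

variable {ι A : Type*} [Ring A] {γ : ι → A}

theorem anticommutator_eq [DecidableEq ι] (hγ : IsMajoranaFamily γ) (i j : ι) :
    γ i * γ j + γ j * γ i = if i = j then 2 else 0 := by
  split_ifs with h
  · rw [h, hγ.mul_self, one_add_one_eq_two]
  · rw [hγ.anticomm i j h, neg_add_cancel]

theorem lie_mul_mul [DecidableEq ι] (hγ : IsMajoranaFamily γ) (a b c d : ι) :
    ⁅γ a * γ b, γ c * γ d⁆ =
      (if b = c then 2 * (γ a * γ d) else 0) - (if b = d then 2 * (γ a * γ c) else 0) +
      (if a = c then 2 * (γ d * γ b) else 0) - (if a = d then 2 * (γ c * γ b) else 0) := by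
  calc ⁅γ a * γ b, γ c * γ d⁆
      = γ a * (γ b * γ c + γ c * γ b) * γ d - γ a * γ c * (γ b * γ d + γ d * γ b) +
        (γ a * γ c + γ c * γ a) * γ d * γ b - γ c * (γ a * γ d + γ d * γ a) * γ b := by
        rw [Ring.lie_def]; noncomm_ring
    _ = _ := by
        simp only [hγ.anticommutator_eq]
        split_ifs <;> simp [two_mul, mul_two, add_mul]

theorem lie_mul_mul_mem_span {R : Type*} [Ring R] [Module R A] (hγ : IsMajoranaFamily γ)
    (a b c d : ι) : ⁅γ a * γ b, γ c * γ d⁆ ∈ Submodule.span R (pairProducts γ) := by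
  classical
  by_cases hsame : c = a ∧ d = b
  · rw [hsame.1, hsame.2, lie_self]
    exact zero_mem _
  by_cases hswap : c = b ∧ d = a
  · have hab : a ≠ b := fun h => hsame ⟨hswap.1.trans h.symm, hswap.2.trans h⟩
    rw [hswap.1, hswap.2, hγ.anticomm b a hab.symm, lie_neg, lie_self, neg_zero]
    exact zero_mem _
  -- outside these two cases, every surviving term `2 γ_e γ_f` has `e ≠ f`
  have hterm : ∀ (p : Prop) [Decidable p] (e f : ι), (p → e ≠ f) →
      (if p then 2 * (γ e * γ f) else 0) ∈ Submodule.span R (pairProducts γ) := by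
    intro p _ e f hef
    split_ifs with hp
    · have hmem : γ e * γ f ∈ Submodule.span R (pairProducts γ) :=
        Submodule.subset_span ⟨e, f, hef hp, rfl⟩
      rw [two_mul]
      exact add_mem hmem hmem
    · exact zero_mem _
  rw [hγ.lie_mul_mul]
  refine sub_mem (add_mem (sub_mem (hterm _ _ _ ?_) (hterm _ _ _ ?_)) (hterm _ _ _ ?_))
    (hterm _ _ _ ?_) <;> grind

theorem lie_mem_span_pairProducts {R : Type*} [CommRing R] [Algebra R A]
    (hγ : IsMajoranaFamily γ) {x y : A} (hx : x ∈ Submodule.span R (pairProducts γ))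
    (hy : y ∈ Submodule.span R (pairProducts γ)) :
    ⁅x, y⁆ ∈ Submodule.span R (pairProducts γ) := by
  refine Submodule.lie_mem_span_of_forall_lie_mem ?_ hx hy
  rintro _ ⟨a, b, -, rfl⟩ _ ⟨c, d, -, rfl⟩
  exact hγ.lie_mul_mul_mem_span a b c d

theorem mul_mul_comm_of_ne (hγ : IsMajoranaFamily γ) {a b e : ι} (ha : e ≠ a) (hb : e ≠ b) :
    γ e * (γ a * γ b) = γ a * γ b * γ e := by
  rw [← mul_assoc, hγ.anticomm e a ha, neg_mul, mul_assoc, hγ.anticomm e b hb, mul_neg,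
    neg_neg, mul_assoc]

theorem mul_mul_anticomm_left (hγ : IsMajoranaFamily γ) {a b : ι} (hab : a ≠ b) :
    γ a * (γ a * γ b) = -(γ a * γ b * γ a) := by
  rw [← mul_assoc, hγ.mul_self, one_mul, mul_assoc, hγ.anticomm b a hab.symm, mul_neg,
    ← mul_assoc, hγ.mul_self, one_mul, neg_neg]

theorem mul_mul_anticomm_right (hγ : IsMajoranaFamily γ) {a b : ι} (hab : a ≠ b) :
    γ b * (γ a * γ b) = -(γ a * γ b * γ b) := by
  rw [← mul_assoc, hγ.anticomm b a hab.symm, neg_mul, mul_assoc]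

variable {n K : Type*} [Fintype n] [DecidableEq n] [Field K] [CharZero K]

theorem trace_mul_mul_eq_zero {γ : ι → Matrix n n K} (hγ : IsMajoranaFamily γ) {a b c d : ι}
    (hcd : c ≠ d) (h : (c ≠ a ∧ c ≠ b) ∨ (d ≠ a ∧ d ≠ b)) :
    trace (γ a * γ b * (γ c * γ d)) = 0 := by
  rcases h with ⟨ha, hb⟩ | ⟨ha, hb⟩
  · refine trace_eq_zero_of_anticomm (hγ.mul_self c) ?_
    rw [← mul_assoc, hγ.mul_mul_comm_of_ne ha hb, mul_assoc, hγ.mul_mul_anticomm_left hcd,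
      mul_neg, ← mul_assoc]
  · refine trace_eq_zero_of_anticomm (hγ.mul_self d) ?_
    rw [← mul_assoc, hγ.mul_mul_comm_of_ne ha hb, mul_assoc, hγ.mul_mul_anticomm_right hcd,
      mul_neg, ← mul_assoc]

theorem linearIndependent_pairProducts [LinearOrder ι] [Nonempty n] {R : Type*} [Field R]
    [Algebra R K] {γ : ι → Matrix n n K} (hγ : IsMajoranaFamily γ) :
    LinearIndependent R (fun p : {p : ι × ι // p.1 < p.2} => γ p.1.1 * γ p.1.2) := by
  rw [linearIndependent_iff']
  intro s g hg q hq
  have htr := congrArg (fun X => trace (γ q.1.2 * γ q.1.1 * X)) hg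
  simp only [Finset.mul_sum, mul_smul_comm, trace_sum, trace_smul, mul_zero, trace_zero] at htr
  rw [Finset.sum_eq_single q] at htr
  · have hone : γ q.1.2 * γ q.1.1 * (γ q.1.1 * γ q.1.2) = 1 := by
      rw [mul_assoc, ← mul_assoc (γ q.1.1), hγ.mul_self, one_mul, hγ.mul_self]
    rw [hone, trace_one, smul_eq_zero] at htr
    exact htr.resolve_right (Nat.cast_ne_zero.mpr Fintype.card_ne_zero)
  · rintro ⟨⟨c, d⟩, hcd⟩ _ hpq
    obtain ⟨⟨a, b⟩, hab⟩ := q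
    suffices h : (c ≠ b ∧ c ≠ a) ∨ (d ≠ b ∧ d ≠ a) by
      rw [hγ.trace_mul_mul_eq_zero hcd.ne h, smul_zero]
    by_contra h
    obtain ⟨rfl | rfl, rfl | rfl⟩ : (c = b ∨ c = a) ∧ (d = b ∨ d = a) := by tauto
    all_goals order
  · exact fun h => absurd hq h

theorem finrank_span_pairProducts [Fintype ι] [Nonempty n] {R : Type*} [Field R] [Algebra R K]
    {γ : ι → Matrix n n K} (hγ : IsMajoranaFamily γ) :
    Module.finrank R (Submodule.span R (pairProducts γ)) = (Fintype.card ι).choose 2 := by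
  let : LinearOrder ι := LinearOrder.lift' _ (Fintype.equivFin ι).injective
  have hspan : Submodule.span R (pairProducts γ) =
      Submodule.span R (Set.range fun p : {p : ι × ι // p.1 < p.2} => γ p.1.1 * γ p.1.2) := by
    refine le_antisymm (Submodule.span_le.mpr ?_) (Submodule.span_mono ?_)
    · rintro _ ⟨i, j, hij, rfl⟩
      rcases hij.lt_or_gt with h | h
      · exact Submodule.subset_span ⟨⟨(i, j), h⟩, rfl⟩
      · rw [hγ.anticomm i j hij]
        exact neg_mem (Submodule.subset_span ⟨⟨(j, i), h⟩, rfl⟩)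
    · rintro _ ⟨p, rfl⟩
      exact ⟨p.1.1, p.1.2, p.2.ne, rfl⟩
  rw [hspan, finrank_span_eq_card hγ.linearIndependent_pairProducts, Fintype.card_subtype,
    Fintype.card_product_filter_lt]

end IsMajoranaFamily

def pauliMulIndex : Fin 4 → Fin 4 → Fin 4
  | 0, b => b
  | 1, 0 => 1 | 1, 1 => 0 | 1, 2 => 3 | 1, 3 => 2
  | 2, 0 => 2 | 2, 1 => 3 | 2, 2 => 0 | 2, 3 => 1
  | 3, 0 => 3 | 3, 1 => 2 | 3, 2 => 1 | 3, 3 => 0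

noncomputable def pauliMulPhase : Fin 4 → Fin 4 → ℂ
  | 1, 2 => Complex.I
  | 1, 3 => -Complex.I
  | 2, 1 => -Complex.I
  | 2, 3 => Complex.I
  | 3, 1 => Complex.I
  | 3, 2 => -Complex.I
  | _, _ => 1

theorem pauli_mul (a b : Fin 4) :
    pauli a * pauli b = pauliMulPhase a b • pauli (pauliMulIndex a b) := by
  fin_cases a <;> fin_cases b <;>
    · ext i j
      fin_cases i <;> fin_cases j <;>
        (simp [pauli, pauliMulIndex, pauliMulPhase, Matrix.mul_apply, Matrix.one_apply,
          Fin.sum_univ_succ]; try ring_nf)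

theorem pauliMulIndex_comm (a b : Fin 4) : pauliMulIndex a b = pauliMulIndex b a := by
  revert a b; decide

theorem pauliMulIndex_self (a : Fin 4) : pauliMulIndex a a = 0 := by
  revert a; decide

theorem pauliMulPhase_self (a : Fin 4) : pauliMulPhase a a = 1 := by
  fin_cases a <;> rfl

theorem pauliMulPhase_swap {a b : Fin 4} (ha : a ≠ 0) (hb : b ≠ 0) (hab : a ≠ b) :
    pauliMulPhase b a = -pauliMulPhase a b := by
  fin_cases a <;> fin_cases b <;> simp_all [pauliMulPhase]

theorem pauliMulPhase_eq_I_or_neg_I {a b : Fin 4} (ha : a ≠ 0) (hb : b ≠ 0) (hab : a ≠ b) :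
    pauliMulPhase a b = Complex.I ∨ pauliMulPhase a b = -Complex.I := by
  fin_cases a <;> fin_cases b <;> simp_all [pauliMulPhase]

theorem PauliMat_mul {n : ℕ} (p q : Fin n → Fin 4) :
    PauliMat p * PauliMat q =
      (∏ i, pauliMulPhase (p i) (q i)) • PauliMat (fun i => pauliMulIndex (p i) (q i)) := by
  ext x y
  have hsite : ∀ i, ∑ z : Fin 2, pauli (p i) (x i) z * pauli (q i) z (y i) =
      pauliMulPhase (p i) (q i) * pauli (pauliMulIndex (p i) (q i)) (x i) (y i) := by
    intro i
    simpa [Matrix.mul_apply] using congrFun (congrFun (pauli_mul (p i) (q i)) (x i)) (y i)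
  simp only [PauliMat, Matrix.mul_apply, Matrix.smul_apply, Matrix.of_apply, smul_eq_mul,
    ← Finset.prod_mul_distrib, ← hsite]
  rw [← Fintype.piFinset_univ, Finset.prod_univ_sum]

theorem PauliMat_mul_self {n : ℕ} (p : Fin n → Fin 4) : PauliMat p * PauliMat p = 1 := by
  simp only [PauliMat_mul, pauliMulIndex_self, pauliMulPhase_self, Finset.prod_const_one,
    one_smul]
  ext x y
  simp [PauliMat, pauli, Matrix.one_apply, Finset.prod_boole, funext_iff]

theorem PauliMat_mul_eq_smul_of_phase_eq_one {n : ℕ} {p q r : Fin n → Fin 4} (i : Fin n)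
    (hr : ∀ x, pauliMulIndex (p x) (q x) = r x)
    (hc : ∀ x, x ≠ i → pauliMulPhase (p x) (q x) = 1) :
    PauliMat p * PauliMat q = pauliMulPhase (p i) (q i) • PauliMat r := by
  rw [PauliMat_mul, Finset.prod_eq_single i (fun x _ hx => hc x hx) (by simp), funext hr]

theorem ladderString_swap {n : ℕ} {i j : Fin n} (h : i ≠ j) (A B : Fin 4) :
    ladderString j i B A = ladderString i j A B := by
  funext x
  simp only [ladderString, min_comm j, max_comm j]
  split_ifs <;> simp_all

theorem ltr_ne_zero (α : Fin 2) : ltr α ≠ 0 := by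
  fin_cases α <;> decide

theorem ltr_ne_three (α : Fin 2) : ltr α ≠ 3 := by
  fin_cases α <;> decide

theorem ltr_injective : Function.Injective ltr := by
  decide

def jwString {M : ℕ} (i : Fin M) (α : Fin 2) : Fin M → Fin 4 :=
  fun x => if x = i then ltr α else if x < i then 3 else 0

section JordanWigner

variable {M : ℕ} {i j : Fin M}

theorem jwString_self (i : Fin M) (α : Fin 2) : jwString i α i = ltr α := by
  simp [jwString]

theorem jwString_of_lt (h : i < j) (α : Fin 2) : jwString j α i = 3 := by
  simp [jwString, h.ne, h]

theorem pauliMulIndex_jwString_of_lt (h : i < j) (α β : Fin 2) (x : Fin M) :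
    pauliMulIndex (jwString i α x) (jwString j β x) =
      ladderString i j (ltrBar α) (ltr β) x := by
  simp only [jwString, ladderString, min_eq_left h.le, max_eq_right h.le]
  split_ifs <;> first | omega | rfl | (fin_cases α <;> rfl)

theorem pauliMulPhase_jwString_of_lt (h : i < j) (α β : Fin 2) {x : Fin M} (hx : x ≠ i) :
    pauliMulPhase (jwString i α x) (jwString j β x) = 1 ∧
      pauliMulPhase (jwString j β x) (jwString i α x) = 1 := by
  simp only [jwString, if_neg hx]
  split_ifs <;> first | omega | (constructor <;> rfl) | (fin_cases β <;> constructor <;> rfl)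

theorem pauliMulIndex_jwString_self {α β : Fin 2} (h : α ≠ β) (x : Fin M) :
    pauliMulIndex (jwString i α x) (jwString i β x) = zString i x := by
  simp only [jwString, zString]
  split_ifs <;> first | rfl | (fin_cases α <;> fin_cases β <;> first | rfl | exact absurd rfl h)

theorem pauliMulPhase_jwString_self (α β : Fin 2) {x : Fin M} (hx : x ≠ i) :
    pauliMulPhase (jwString i α x) (jwString i β x) = 1 := by
  simp only [jwString, if_neg hx]
  split_ifs <;> rfl

theorem PauliMat_jwString_mul_of_lt (h : i < j) (α β : Fin 2) :
    PauliMat (jwString i α) * PauliMat (jwString j β) =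
      pauliMulPhase (ltr α) 3 • PauliMat (ladderString i j (ltrBar α) (ltr β)) := by
  rw [PauliMat_mul_eq_smul_of_phase_eq_one i (pauliMulIndex_jwString_of_lt h α β)
    (fun x hx => (pauliMulPhase_jwString_of_lt h α β hx).1), jwString_self, jwString_of_lt h]

theorem PauliMat_jwString_mul_of_gt (h : i < j) (α β : Fin 2) :
    PauliMat (jwString j β) * PauliMat (jwString i α) =
      pauliMulPhase 3 (ltr α) • PauliMat (ladderString i j (ltrBar α) (ltr β)) := by
  rw [PauliMat_mul_eq_smul_of_phase_eq_one i
    (fun x => (pauliMulIndex_comm _ _).trans (pauliMulIndex_jwString_of_lt h α β x))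
    (fun x hx => (pauliMulPhase_jwString_of_lt h α β hx).2), jwString_self, jwString_of_lt h]

theorem PauliMat_jwString_mul_self {α β : Fin 2} (h : α ≠ β) :
    PauliMat (jwString i α) * PauliMat (jwString i β) =
      pauliMulPhase (ltr α) (ltr β) • PauliMat (zString i) := by
  rw [PauliMat_mul_eq_smul_of_phase_eq_one i (pauliMulIndex_jwString_self h)
    (fun x hx => pauliMulPhase_jwString_self α β hx), jwString_self, jwString_self]

theorem PauliMat_jwString_anticomm_of_lt (h : i < j) (α β : Fin 2) :
    PauliMat (jwString i α) * PauliMat (jwString j β) =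
      -(PauliMat (jwString j β) * PauliMat (jwString i α)) := by
  rw [PauliMat_jwString_mul_of_lt h, PauliMat_jwString_mul_of_gt h,
    pauliMulPhase_swap (ltr_ne_zero α) (by decide) (ltr_ne_three α), neg_smul, neg_neg]

theorem PauliMat_jwString_anticomm_self {α β : Fin 2} (h : α ≠ β) :
    PauliMat (jwString i α) * PauliMat (jwString i β) =
      -(PauliMat (jwString i β) * PauliMat (jwString i α)) := by
  rw [PauliMat_jwString_mul_self h, PauliMat_jwString_mul_self h.symm,
    pauliMulPhase_swap (ltr_ne_zero α) (ltr_ne_zero β) (ltr_injective.ne h), neg_smul, neg_neg]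

end JordanWigner

noncomputable def jwMajorana {m M : ℕ} (v : Fin m → Fin M) (a : Fin m × Fin 2) :
    Matrix (Fin M → Fin 2) (Fin M → Fin 2) ℂ :=
  PauliMat (jwString (v a.1) a.2)

theorem smul_mem_iff_I_smul_mem {E : Type*} [AddCommGroup E] [Module ℂ E] [Module ℝ E]
    (S : Submodule ℝ E) {c : ℂ} (hc : c = Complex.I ∨ c = -Complex.I) (x : E) :
    c • x ∈ S ↔ Complex.I • x ∈ S := by
  rcases hc with rfl | rfl
  · rfl
  · rw [neg_smul, neg_mem_iff]

section Container

variable {m M : ℕ} {v : Fin m → Fin M}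

theorem isMajoranaFamily_jwMajorana (hv : Function.Injective v) :
    IsMajoranaFamily (jwMajorana v) where
  mul_self _ := PauliMat_mul_self _
  anticomm := by
    rintro ⟨k, α⟩ ⟨l, β⟩ hne
    rcases lt_trichotomy (v k) (v l) with h | h | h
    · exact PauliMat_jwString_anticomm_of_lt h α β
    · obtain rfl := hv h
      exact PauliMat_jwString_anticomm_self fun hαβ : α = β => hne (by rw [hαβ])
    · exact neg_eq_iff_eq_neg.mp (PauliMat_jwString_anticomm_of_lt h β α).symm

theorem ladderString_mem_Tset {k l : Fin m} (h : v k < v l)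
    (α β : Fin 2) : ladderString (v k) (v l) (ltrBar α) (ltr β) ∈ Tset v := by
  have hkl : k ≠ l := fun hkl => h.ne (congrArg v hkl)
  left
  fin_cases α <;> fin_cases β
  · exact ⟨l, k, hkl.symm, Or.inr (Or.inr (ladderString_swap h.ne _ _).symm)⟩
  · exact ⟨k, l, hkl, Or.inr (Or.inl rfl)⟩
  · exact ⟨k, l, hkl, Or.inl rfl⟩
  · exact ⟨k, l, hkl, Or.inr (Or.inr rfl)⟩

theorem pairProducts_jwMajorana_subset_span (hv : Function.Injective v) :
    pairProducts (jwMajorana v) ⊆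
      Submodule.span ℝ ((fun p => Complex.I • PauliMat p) '' Tset v) := by
  rintro _ ⟨a, b, hab, rfl⟩
  rw [SetLike.mem_coe]
  wlog h : v a.1 ≤ v b.1 generalizing a b
  · rw [(isMajoranaFamily_jwMajorana hv).anticomm a b hab]
    exact neg_mem (this b a hab.symm (not_le.mp h).le)
  obtain ⟨k, α⟩ := a
  obtain ⟨l, β⟩ := b
  dsimp only [jwMajorana] at h ⊢
  rcases h.lt_or_eq with h | h
  · rw [ PauliMat_jwString_mul_of_lt h, smul_mem_iff_I_smul_mem _
      (pauliMulPhase_eq_I_or_neg_I (ltr_ne_zero α) (by decide) (ltr_ne_three α))]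
    exact Submodule.subset_span ⟨_, ladderString_mem_Tset h α β, rfl⟩
  · obtain rfl := hv h
    have hαβ : α ≠ β := fun hαβ => hab (by rw [hαβ])
    rw [PauliMat_jwString_mul_self hαβ, smul_mem_iff_I_smul_mem _
      (pauliMulPhase_eq_I_or_neg_I (ltr_ne_zero α) (ltr_ne_zero β) (ltr_injective.ne hαβ))]
    exact Submodule.subset_span ⟨_, Or.inr ⟨k, rfl⟩, rfl⟩

theorem I_smul_PauliMat_ladderString_mem_span (hv : Function.Injective v) {k l : Fin m}
    (hkl : k ≠ l) {A B : Fin 4} (hA : A = 1 ∨ A = 2) (hB : B = 1 ∨ B = 2) :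
    Complex.I • PauliMat (ladderString (v k) (v l) A B) ∈
      Submodule.span ℝ (pairProducts (jwMajorana v)) := by
  wlog h : v k < v l generalizing k l A B
  · rw [← ladderString_swap (hv.ne hkl)]
    exact this hkl.symm hB hA ((not_lt.mp h).lt_of_ne (hv.ne hkl.symm))
  obtain ⟨α, rfl⟩ : ∃ α, ltrBar α = A := by rcases hA with rfl | rfl; exacts [⟨1, rfl⟩, ⟨0, rfl⟩]
  obtain ⟨β, rfl⟩ : ∃ β, ltr β = B := by rcases hB with rfl | rfl; exacts [⟨0, rfl⟩, ⟨1, rfl⟩]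
  rw [← smul_mem_iff_I_smul_mem _
    (pauliMulPhase_eq_I_or_neg_I (ltr_ne_zero α) (by decide) (ltr_ne_three α)),
    ← PauliMat_jwString_mul_of_lt h]
  exact Submodule.subset_span ⟨(k, α), (l, β), by simp [hkl], rfl⟩

theorem Tset_subset_span_pairProducts (hv : Function.Injective v) :
    (fun p => Complex.I • PauliMat p) '' Tset v ⊆
      Submodule.span ℝ (pairProducts (jwMajorana v)) := by
  rintro _ ⟨t, ⟨k, l, hkl, ht⟩ | ⟨k, rfl⟩, rfl⟩
  · rcases ht with rfl | rfl | rfl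
    · exact I_smul_PauliMat_ladderString_mem_span hv hkl (Or.inl rfl) (Or.inl rfl)
    · exact I_smul_PauliMat_ladderString_mem_span hv hkl (Or.inr rfl) (Or.inr rfl)
    · exact I_smul_PauliMat_ladderString_mem_span hv hkl (Or.inl rfl) (Or.inr rfl)
  · have hz : jwMajorana v (k, 0) * jwMajorana v (k, 1) =
        Complex.I • PauliMat (zString (v k)) :=
      PauliMat_jwString_mul_self (α := 0) (β := 1) (by decide)
    beta_reduce
    rw [SetLike.mem_coe, ← hz]
    exact Submodule.subset_span ⟨(k, 0), (k, 1), by simp, rfl⟩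

end Container

theorem glarge_closed_and_finrank_general (m M : ℕ) (v : Fin m → Fin M)
    (hv : Function.Injective v) :
    (∀ x ∈ Submodule.span ℝ ((fun p => Complex.I • PauliMat p) '' Tset v),
      ∀ y ∈ Submodule.span ℝ ((fun p => Complex.I • PauliMat p) '' Tset v),
        ⁅x, y⁆ ∈ Submodule.span ℝ ((fun p => Complex.I • PauliMat p) '' Tset v)) ∧
    Module.finrank ℝ
      (Submodule.span ℝ ((fun p => Complex.I • PauliMat p) '' Tset v)) =
      m * (2 * m - 1) := by
  have hγ := isMajoranaFamily_jwMajorana hv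
  have hspan : Submodule.span ℝ ((fun p => Complex.I • PauliMat p) '' Tset v) =
      Submodule.span ℝ (pairProducts (jwMajorana v)) :=
    le_antisymm (Submodule.span_le.mpr (Tset_subset_span_pairProducts hv))
      (Submodule.span_le.mpr (pairProducts_jwMajorana_subset_span hv))
  rw [hspan]
  refine ⟨fun x hx y hy => hγ.lie_mem_span_pairProducts hx hy, ?_⟩
  rw [hγ.finrank_span_pairProducts, Fintype.card_prod, Fintype.card_fin, Fintype.card_fin,
    Nat.choose_two_right, mul_comm m 2, mul_assoc, Nat.mul_div_cancel_left _ two_pos]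

/-- The ℝ-span of `{I • P(t) : t ∈ T_v}` is closed under the commutator bracket and
has dimension `m(2m − 1)`. -/
theorem glarge_closed_and_finrank (m M : ℕ) (hm : 1 ≤ m) (v : Fin m → Fin M)
    (hv : Function.Injective v) :
    (∀ x ∈ Submodule.span ℝ ((fun p => Complex.I • PauliMat p) '' Tset v),
      ∀ y ∈ Submodule.span ℝ ((fun p => Complex.I • PauliMat p) '' Tset v),
        ⁅x, y⁆ ∈ Submodule.span ℝ ((fun p => Complex.I • PauliMat p) '' Tset v)) ∧
    Module.finrank ℝ
      (Submodule.span ℝ ((fun p => Complex.I • PauliMat p) '' Tset v)) =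
      m * (2 * m - 1) :=
  glarge_closed_and_finrank_general m M v hv
end

section
/- Theorem 1(1) (free fermions are polynomial): the Hamiltonian algebra of the Jordan–Wigner transformed free fermion model satisfies dim g(S₀) ≤ 2N(2N−1); in particular it scales polynomially (quadratically) with the number of sites N. -/
open Matrix

attribute [local instance 100] LieRing.ofAssociativeRing

/-!
Under the Jordan–Wigner map every hopping term `I • P(→A_aA_b)` is a product `γ γ'` of two
Majorana operators `γ_{q,c} = Z ⋯ Z σ_c` sitting on qubits of the same spin species. Majorana
operators are pairwise anticommuting involutions, so the commutator of two quadratic monomials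
`γ_a γ_b`, `γ_c γ_d` vanishes unless they share exactly one mode, in which case it is `±2`
times the monomial on the two remaining modes. Hence the real span of the quadratic monomials within
each species is closed under brackets, the two species commute, and the Lie algebra generated
lies in a space of dimension at most `2 · C(2N, 2) = 2N(2N − 1)` (two commuting copies of
`𝔰𝔬(2N)`).
-/

open Submodule in
theorem LieSubalgebra.coe_lieSpan_eq_span_of_forall_lie_mem_span {R L : Type*} [CommRing R]
    [LieRing L] [LieAlgebra R L] {s : Set L}
    (hs : ∀ᵉ (x ∈ s) (y ∈ s), ⁅x, y⁆ ∈ span R s) :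
    (lieSpan R L s : Submodule R L) = span R s := by
  suffices ∀ {x y}, x ∈ span R s → y ∈ span R s → ⁅x, y⁆ ∈ span R s by
    refine le_antisymm ?_ submodule_span_le_lieSpan
    change _ ≤ ({ span R s with lie_mem' := this } : LieSubalgebra R L)
    rw [lieSpan_le]
    exact subset_span
  intro x y hx hy
  induction hx, hy using span_induction₂ with
  | mem_mem x y hx hy => exact hs x hx y hy
  | zero_left y hy => simp
  | zero_right x hx => simp
  | add_left x y z _ _ _ hx hy => simpa using add_mem hx hy
  | add_right x y z _ _ _ hx hy => simpa using add_mem hx hy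
  | smul_left r x y _ _ h => simpa using smul_mem _ r h
  | smul_right r x y _ _ h => simpa using smul_mem _ r h

section AnticommutingFamily

variable {R ι : Type*} [Ring R]

def pairSet (g : ι → R) (A : Set ι) : Set R :=
  {z | ∃ x ∈ A, ∃ y ∈ A, x ≠ y ∧ g x * g y = z}

variable {g : ι → R}

theorem mul_mem_pairSet {A : Set ι} {x y : ι} (hx : x ∈ A) (hy : y ∈ A) (hxy : x ≠ y) :
    g x * g y ∈ pairSet g A :=
  ⟨x, hx, y, hy, hxy, rfl⟩

theorem commute_mul_mul_of_ne (hanti : Pairwise fun i j => g i * g j = -(g j * g i))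
    {a b c d : ι} (hac : a ≠ c) (had : a ≠ d) (hbc : b ≠ c) (hbd : b ≠ d) :
    Commute (g a * g b) (g c * g d) := by
  have key : ∀ e, a ≠ e → b ≠ e → Commute (g a * g b) (g e) := fun e hae hbe => by
    rw [Commute, SemiconjBy, mul_assoc, hanti hbe, mul_neg, ← mul_assoc, hanti hae, neg_mul,
      neg_neg, mul_assoc]
  exact (key c hac hbc).mul_right (key d had hbd)

theorem lie_mul_mul_shared_left (hsq : ∀ i, g i * g i = 1)
    (hanti : Pairwise fun i j => g i * g j = -(g j * g i)) {a b d : ι} (hab : a ≠ b)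
    (had : a ≠ d) (hbd : b ≠ d) :
    ⁅g a * g b, g a * g d⁆ = 2 • (g d * g b) := by
  have hmul : ∀ e, a ≠ e → g a * g e * g a = -g e := fun e hae => by
    rw [mul_assoc, hanti hae.symm, mul_neg, ← mul_assoc, hsq, one_mul]
  rw [Ring.lie_def, ← mul_assoc, ← mul_assoc, hmul b hab, hmul d had, neg_mul, neg_mul,
    hanti hbd, neg_neg, two_smul, sub_neg_eq_add]

open Submodule in
theorem lie_mem_span_pairSet {K : Type*} [CommRing K] [Module K R] (hsq : ∀ i, g i * g i = 1)
    (hanti : Pairwise fun i j => g i * g j = -(g j * g i)) {A : Set ι} {x y : R}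
    (hx : x ∈ pairSet g A) (hy : y ∈ pairSet g A) : ⁅x, y⁆ ∈ span K (pairSet g A) := by
  obtain ⟨a, ha, b, hb, hab, rfl⟩ := hx
  obtain ⟨c, hc, d, hd, hcd, rfl⟩ := hy
  have shared_left : ∀ {a b d}, a ∈ A → b ∈ A → d ∈ A → a ≠ b → a ≠ d →
      ⁅g a * g b, g a * g d⁆ ∈ span K (pairSet g A) := by
    intro a b d ha hb hd hab had
    rcases eq_or_ne b d with rfl | hbd
    · rw [lie_self]
      exact zero_mem _
    · rw [lie_mul_mul_shared_left hsq hanti hab had hbd]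
      exact nsmul_mem (subset_span (mul_mem_pairSet hd hb hbd.symm)) 2
  by_cases hac : a = c
  · subst hac
    exact shared_left ha hb hd hab hcd
  by_cases had : a = d
  · subst had
    rw [hanti hcd, lie_neg]
    exact neg_mem (shared_left ha hb hc hab hac)
  by_cases hbc : b = c
  · subst hbc
    rw [hanti hab, neg_lie]
    exact neg_mem (shared_left hb ha hd (Ne.symm hab) hcd)
  by_cases hbd : b = d
  · subst hbd
    rw [hanti hab, hanti hcd, neg_lie, lie_neg, neg_neg]
    exact shared_left hb ha hc (Ne.symm hab) hbc
  rw [(commute_mul_mul_of_ne hanti hac had hbc hbd).lie_eq]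
  exact zero_mem _

theorem lie_eq_zero_of_mem_pairSet_of_disjoint
    (hanti : Pairwise fun i j => g i * g j = -(g j * g i)) {A B : Set ι} (hAB : Disjoint A B)
    {x y : R} (hx : x ∈ pairSet g A) (hy : y ∈ pairSet g B) :
    ⁅x, y⁆ = 0 := by
  obtain ⟨a, ha, b, hb, -, rfl⟩ := hx
  obtain ⟨c, hc, d, hd, -, rfl⟩ := hy
  exact (commute_mul_mul_of_ne hanti (hAB.ne_of_mem ha hc) (hAB.ne_of_mem ha hd)
    (hAB.ne_of_mem hb hc) (hAB.ne_of_mem hb hd)).lie_eq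

open Submodule in
theorem finrank_span_pairSet_le {K : Type*} [Field K] [Module K R]
    (hanti : Pairwise fun i j => g i * g j = -(g j * g i)) (A : Finset ι) :
    Module.finrank K (span K (pairSet g A)) ≤ (A.card).choose 2 := by
  classical
  -- Any linear order works: `g y * g x = -(g x * g y)`, so the monomials with `x < y` span.
  let _ : LinearOrder ι := WellOrderingRel.isWellOrder.linearOrder
  let P := (A ×ˢ A).filter fun p => p.1 < p.2
  let Q := P.image fun p => g p.1 * g p.2
  have hQ : ∀ {x y}, x ∈ A → y ∈ A → x < y → g x * g y ∈ span K (Q : Set R) :=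
    fun hx hy h => subset_span <|
      Finset.mem_image_of_mem _ (Finset.mem_filter.mpr ⟨Finset.mk_mem_product hx hy, h⟩)
  have hle : span K (pairSet g A) ≤ span K Q := by
    rw [span_le]
    rintro _ ⟨x, hx, y, hy, hxy, rfl⟩
    rcases lt_or_gt_of_ne hxy with h | h
    · exact hQ hx hy h
    · rw [hanti hxy]
      exact neg_mem (hQ hy hx h)
  calc Module.finrank K (span K (pairSet g A))
      ≤ Module.finrank K (span K (Q : Set R)) := Submodule.finrank_mono hle
    _ ≤ Q.card := finrank_span_finset_le_card Q
    _ ≤ P.card := Finset.card_image_le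
    _ = (A.card).choose 2 := Finset.card_product_filter_lt

theorem finrank_lieSpan_pairSet_union_le {K : Type*} [Field K] [Algebra K R]
    [FiniteDimensional K R] (hsq : ∀ i, g i * g i = 1)
    (hanti : Pairwise fun i j => g i * g j = -(g j * g i)) {A B : Finset ι}
    (hAB : Disjoint A B) :
    Module.finrank K (LieSubalgebra.lieSpan K R (pairSet g A ∪ pairSet g B))
      ≤ (A.card).choose 2 + (B.card).choose 2 := by
  have hAB' : Disjoint (A : Set ι) B := Finset.disjoint_coe.mpr hAB
  have hclosed : ∀ᵉ (x ∈ pairSet g A ∪ pairSet g B) (y ∈ pairSet g A ∪ pairSet g B),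
      ⁅x, y⁆ ∈ Submodule.span K (pairSet g A ∪ pairSet g B) := by
    rintro x (hx | hx) y (hy | hy)
    · exact Submodule.span_mono Set.subset_union_left (lie_mem_span_pairSet hsq hanti hx hy)
    · rw [lie_eq_zero_of_mem_pairSet_of_disjoint hanti hAB' hx hy]
      exact zero_mem _
    · rw [lie_eq_zero_of_mem_pairSet_of_disjoint hanti hAB'.symm hx hy]
      exact zero_mem _
    · exact Submodule.span_mono Set.subset_union_right (lie_mem_span_pairSet hsq hanti hx hy)
  change Module.finrank K (LieSubalgebra.lieSpan K R _ : Submodule K R) ≤ _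
  rw [LieSubalgebra.coe_lieSpan_eq_span_of_forall_lie_mem_span hclosed, Submodule.span_union]
  exact (Submodule.finrank_add_le_finrank_add_finrank _ _).trans
    (add_le_add (finrank_span_pairSet_le hanti A) (finrank_span_pairSet_le hanti B))

end AnticommutingFamily

section PiKron

variable {ι m R : Type*} [Fintype ι] [CommRing R]

def piKron (M : ι → Matrix m m R) : Matrix (ι → m) (ι → m) R :=
  Matrix.of fun x y => ∏ i, M i (x i) (y i)

theorem piKron_mul [DecidableEq ι] [Fintype m] (M M' : ι → Matrix m m R) :
    piKron M * piKron M' = piKron fun i => M i * M' i := by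
  ext x y
  simp only [piKron, mul_apply, of_apply, ← Finset.prod_mul_distrib]
  rw [Finset.prod_univ_sum (fun _ => Finset.univ), Fintype.piFinset_univ]

theorem piKron_one [DecidableEq ι] [DecidableEq m] :
    piKron (fun _ : ι => (1 : Matrix m m R)) = 1 := by
  ext x y
  by_cases h : x = y
  · subst h
    simp [piKron]
  · obtain ⟨i, hi⟩ := Function.ne_iff.mp h
    rw [one_apply_ne h]
    exact Finset.prod_eq_zero (Finset.mem_univ i) (one_apply_ne hi)

theorem piKron_smul (c : ι → R) (M : ι → Matrix m m R) :
    piKron (fun i => c i • M i) = (∏ i, c i) • piKron M := by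
  ext x y
  simp [piKron, Finset.prod_mul_distrib]

theorem piKron_mul_eq_smul [DecidableEq ι] [Fintype m] {M M' N : ι → Matrix m m R} (i₀ : ι)
    (c : R) (h₀ : M i₀ * M' i₀ = c • N i₀) (h : ∀ i ≠ i₀, M i * M' i = N i) :
    piKron M * piKron M' = c • piKron N := by
  have hsite : (fun i => M i * M' i) = fun i => (if i = i₀ then c else 1) • N i := by
    funext i
    by_cases hi : i = i₀
    · subst hi
      simp [h₀]
    · simp [hi, h i hi]
  rw [piKron_mul, hsite, piKron_smul, Finset.prod_ite_eq' Finset.univ i₀]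
  simp

theorem piKron_mul_eq_neg [DecidableEq ι] [Fintype m] {M M' : ι → Matrix m m R} (i₀ : ι)
    (h₀ : M i₀ * M' i₀ = -(M' i₀ * M i₀)) (h : ∀ i ≠ i₀, Commute (M i) (M' i)) :
    piKron M * piKron M' = -(piKron M' * piKron M) := by
  rw [piKron_mul_eq_smul (N := fun i => M' i * M i) i₀ (-1) (by simpa using h₀)
    fun i hi => (h i hi).eq, piKron_mul, neg_one_smul]

end PiKron

@[simp]
theorem pauli_zero : pauli 0 = 1 := rfl

theorem pauli_mul_self (a : Fin 4) : pauli a * pauli a = 1 := by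
  fin_cases a <;> ext i j <;> fin_cases i <;> fin_cases j <;> simp [pauli]

theorem pauli_ltr_mul_pauli_three (c : Fin 2) :
    pauli (ltr c) * pauli 3 = -(pauli 3 * pauli (ltr c)) := by
  fin_cases c <;> ext i j <;> fin_cases i <;> fin_cases j <;> simp [pauli, ltr]

theorem pauli_ltr_mul_pauli_ltr {c c' : Fin 2} (h : c ≠ c') :
    pauli (ltr c) * pauli (ltr c') = -(pauli (ltr c') * pauli (ltr c)) := by
  fin_cases c <;> fin_cases c' <;> simp at h <;> ext i j <;> fin_cases i <;> fin_cases j <;>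
    simp [pauli, ltr]

theorem pauli_two_mul_pauli_three : pauli 2 * pauli 3 = Complex.I • pauli 1 := by
  ext i j; fin_cases i <;> fin_cases j <;> simp [pauli]

theorem pauli_three_mul_pauli_one : pauli 3 * pauli 1 = Complex.I • pauli 2 := by
  ext i j; fin_cases i <;> fin_cases j <;> simp [pauli]

theorem pauliMat_eq_piKron {n : ℕ} (p : Fin n → Fin 4) :
    PauliMat p = piKron fun i => pauli (p i) := rfl

def majoranaString {n : ℕ} (q : Fin n) (c : Fin 2) : Fin n → Fin 4 :=
  fun m => if m < q then 3 else if m = q then ltr c else 0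

noncomputable def majorana {n : ℕ} (x : Fin n × Fin 2) :
    Matrix (Fin n → Fin 2) (Fin n → Fin 2) ℂ :=
  PauliMat (majoranaString x.1 x.2)

theorem majorana_mul_self {n : ℕ} (x : Fin n × Fin 2) : majorana x * majorana x = 1 := by
  simp only [majorana, pauliMat_eq_piKron, piKron_mul, pauli_mul_self, piKron_one]

theorem commute_pauli_majoranaString {n : ℕ} {a b i : Fin n} (hab : a ≤ b) (hi : i ≠ a)
    (c c' : Fin 2) : Commute (pauli (majoranaString a c i)) (pauli (majoranaString b c' i)) := by
  rcases lt_or_gt_of_ne hi with h | h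
  · simp [majoranaString, h, h.trans_le hab]
  · simp [majoranaString, h.not_gt, hi]

theorem pauli_majoranaString_mul_pauli_majoranaString {n : ℕ} {a b i : Fin n} (hab : a < b)
    (hi : i ≠ a) (A : Fin 4) (c c' : Fin 2) :
    pauli (majoranaString a c i) * pauli (majoranaString b c' i)
      = pauli (ladderString a b A (ltr c') i) := by
  simp only [majoranaString, ladderString, min_eq_left hab.le, max_eq_right hab.le, if_neg hi]
  rcases lt_or_gt_of_ne hi with h | h
  · simp [h, h.trans hab, (h.trans hab).ne, h.not_gt, pauli_mul_self]
  · rcases lt_trichotomy i b with h' | rfl | h'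
    · simp [h, h', h.not_gt, h'.ne]
    · simp [h.not_gt]
    · simp [h, h.not_gt, h'.not_gt, h'.ne']

theorem majorana_mul_eq_neg_of_le {n : ℕ} {a b : Fin n} {c c' : Fin 2} (hab : a ≤ b)
    (hne : (a, c) ≠ (b, c')) :
    majorana (a, c) * majorana (b, c') = -(majorana (b, c') * majorana (a, c)) := by
  refine piKron_mul_eq_neg a ?_ fun i hi => commute_pauli_majoranaString hab hi c c'
  rcases hab.lt_or_eq with hab | rfl
  · simpa [majoranaString, hab] using pauli_ltr_mul_pauli_three c
  · simpa [majoranaString] using pauli_ltr_mul_pauli_ltr (c := c) (c' := c') (by simpa using hne)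

theorem majorana_anticomm {n : ℕ} :
    Pairwise fun x y : Fin n × Fin 2 => majorana x * majorana y = -(majorana y * majorana x) := by
  rintro ⟨a, c⟩ ⟨b, c'⟩ hne
  rcases le_total a b with hab | hba
  · exact majorana_mul_eq_neg_of_le hab hne
  · rw [majorana_mul_eq_neg_of_le hba hne.symm, neg_neg]

theorem majorana_mul_majorana_eq_I_smul_ladderString_X {n : ℕ} {a b : Fin n} (hab : a < b) :
    majorana (a, 1) * majorana (b, 0) = Complex.I • PauliMat (ladderString a b 1 1) := by
  refine piKron_mul_eq_smul a _ ?_ fun i hi =>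
    pauli_majoranaString_mul_pauli_majoranaString hab hi 1 1 0
  simpa [majoranaString, ladderString, ltr, hab] using pauli_two_mul_pauli_three

theorem majorana_mul_majorana_eq_I_smul_ladderString_Y {n : ℕ} {a b : Fin n} (hab : a < b) :
    majorana (b, 1) * majorana (a, 0) = Complex.I • PauliMat (ladderString a b 2 2) := by
  refine piKron_mul_eq_smul a _ ?_ fun i hi => ?_
  · simpa [majoranaString, ladderString, ltr, hab] using pauli_three_mul_pauli_one
  · rw [← (commute_pauli_majoranaString hab.le hi 0 1).eq]
    exact pauli_majoranaString_mul_pauli_majoranaString hab hi 2 0 1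

theorem ladderString_comm {n : ℕ} {i j : Fin n} (h : i ≠ j) (A B : Fin 4) :
    ladderString i j A B = ladderString j i B A := by
  funext k
  simp only [ladderString]
  rcases eq_or_ne k i with rfl | hk
  · simp [h]
  · rcases eq_or_ne k j with rfl | hk'
    · simp [hk]
    · simp [hk, hk', min_comm, max_comm]

theorem I_smul_pauliMat_ladderString_mem_pairSet {n : ℕ} {A : Set (Fin n × Fin 2)} {a b : Fin n}
    (hab : a ≠ b) (ha : ∀ c, (a, c) ∈ A) (hb : ∀ c, (b, c) ∈ A) {L : Fin 4}
    (hL : L = 1 ∨ L = 2) :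
    Complex.I • PauliMat (ladderString a b L L) ∈ pairSet majorana A := by
  wlog hlt : a < b generalizing a b
  · rw [ladderString_comm hab]
    exact this hab.symm hb ha ((lt_or_gt_of_ne hab).resolve_left hlt)
  rcases hL with rfl | rfl
  · rw [← majorana_mul_majorana_eq_I_smul_ladderString_X hlt]
    exact mul_mem_pairSet (ha 1) (hb 0) (by simp [hab])
  · rw [← majorana_mul_majorana_eq_I_smul_ladderString_Y hlt]
    exact mul_mem_pairSet (hb 1) (ha 0) (by simp [hab.symm])

def majoranaModes {N n : ℕ} (v : Fin N → Fin n) : Finset (Fin n × Fin 2) :=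
  Finset.univ.image fun x : Fin N × Fin 2 => (v x.1, x.2)

theorem card_majoranaModes_le {N n : ℕ} (v : Fin N → Fin n) :
    (majoranaModes v).card ≤ 2 * N :=
  Finset.card_image_le.trans (by simp [mul_comm])

theorem disjoint_majoranaModes {N n : ℕ} {u d : Fin N → Fin n}
    (h : Disjoint (Set.range u) (Set.range d)) : Disjoint (majoranaModes u) (majoranaModes d) := by
  simp only [majoranaModes, Finset.disjoint_left, Finset.mem_image, Finset.mem_univ, true_and]
  rintro _ ⟨⟨k, c⟩, rfl⟩ ⟨⟨l, c'⟩, hlk⟩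
  exact Set.disjoint_left.mp h ⟨k, rfl⟩ ⟨l, congrArg Prod.fst hlk⟩

theorem I_smul_pauliMat_mem_pairSet_majoranaModes {N : ℕ} {G : SimpleGraph (Fin N)}
    {v : Fin N → Fin (2 * N)} (hv : Function.Injective v) {p : Fin (2 * N) → Fin 4}
    (hp : p ∈ Sspin G v) : Complex.I • PauliMat p ∈ pairSet majorana (majoranaModes v) := by
  obtain ⟨k, l, hkl, hp⟩ := hp
  have hmem : ∀ k c, (v k, c) ∈ (majoranaModes v : Set (Fin (2 * N) × Fin 2)) := fun k c =>
    Finset.mem_image_of_mem _ (Finset.mem_univ (k, c))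
  rcases hp with rfl | rfl
  · exact I_smul_pauliMat_ladderString_mem_pairSet (hv.ne hkl.ne) (hmem k) (hmem l) (.inl rfl)
  · exact I_smul_pauliMat_ladderString_mem_pairSet (hv.ne hkl.ne) (hmem k) (hmem l) (.inr rfl)

def speciesQuadratics {N n : ℕ} (u d : Fin N → Fin n) :
    Set (Matrix (Fin n → Fin 2) (Fin n → Fin 2) ℂ) :=
  pairSet majorana (majoranaModes u : Set (Fin n × Fin 2)) ∪ pairSet majorana (majoranaModes d)

theorem image_sfree_subset_speciesQuadratics {N : ℕ} (G : SimpleGraph (Fin N))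
    {u d : Fin N → Fin (2 * N)} (hu : Function.Injective u) (hd : Function.Injective d) :
    (fun p => Complex.I • PauliMat p) '' Sfree G u d ⊆ speciesQuadratics u d := by
  rintro _ ⟨p, hp | hp, rfl⟩
  · exact .inl (I_smul_pauliMat_mem_pairSet_majoranaModes hu hp)
  · exact .inr (I_smul_pauliMat_mem_pairSet_majoranaModes hd hp)

theorem finrank_hamAlg_free_fermion_le_general (N : ℕ)
    (G : SimpleGraph (Fin N))
    (u d : Fin N → Fin (2 * N)) (hu : Function.Injective u) (hd : Function.Injective d)
    (hdisj : Disjoint (Set.range u) (Set.range d)) :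
    Module.finrank ℝ (hamAlg (Sfree G u d)) ≤ 2 * N * (2 * N - 1) := by
  have hle : hamAlg (Sfree G u d) ≤ LieSubalgebra.lieSpan ℝ _ (speciesQuadratics u d) :=
    LieSubalgebra.lieSpan_mono (image_sfree_subset_speciesQuadratics G hu hd)
  calc Module.finrank ℝ (hamAlg (Sfree G u d))
      ≤ Module.finrank ℝ (LieSubalgebra.lieSpan ℝ _ (speciesQuadratics u d)) :=
        Submodule.finrank_mono ((LieSubalgebra.toSubmodule_le_toSubmodule _ _).mpr hle)
    _ ≤ (majoranaModes u).card.choose 2 + (majoranaModes d).card.choose 2 :=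
        finrank_lieSpan_pairSet_union_le majorana_mul_self majorana_anticomm
          (disjoint_majoranaModes hdisj)
    _ ≤ (2 * N).choose 2 + (2 * N).choose 2 :=
        add_le_add (Nat.choose_le_choose 2 (card_majoranaModes_le u))
          (Nat.choose_le_choose 2 (card_majoranaModes_le d))
    _ = 2 * N * (2 * N - 1) := by
        rw [← two_mul, Nat.choose_two_right,
          Nat.mul_div_cancel' (Nat.even_mul_pred_self _).two_dvd]

/-- Theorem 1(1): the Hamiltonian algebra of the Jordan–Wigner transformed free fermion
model has dimension at most `2N(2N − 1)`, i.e. polynomial (quadratic) in `N`. -/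
theorem finrank_hamAlg_free_fermion_le (N : ℕ) (hN : 1 ≤ N)
    (G : SimpleGraph (Fin N)) (hG : G.Connected)
    (u d : Fin N → Fin (2 * N)) (hu : Function.Injective u) (hd : Function.Injective d)
    (hdisj : Disjoint (Set.range u) (Set.range d))
    (hunion : Set.range u ∪ Set.range d = Set.univ) :
    Module.finrank ℝ (hamAlg (Sfree G u d)) ≤ 2 * N * (2 * N - 1) :=
  finrank_hamAlg_free_fermion_le_general N G u d hu hd hdisj
end
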